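/- arXiv:2309.13710 — 6 statements merged into one kernel-verified Lean document; each statement's English description precedes it below -/
import Mathlib

section
/- Let G be a group and let a, b ∈ G satisfy a^4 = 1 and b^3 = 1. Then the following four conditions are equivalent: (i) ⁅b*a*b, a^2*(b*a*b)*a^2⁆ = 1; (ii) ⁅a^2, (b*a*b)*a^2*(b*a*b)⁆ = 1; (iii) ⁅b*a*b, a^2*(b^2*a^3*b^2)*a^2⁆ = 1; (iv) ⁅b^2*a^3*b^2, a^2*(b*a*b)*a^2⁆ = 1. -/
open scoped commutatorElement

/-! Put `x = b * a * b` and `c = a ^ 2`. Since `a ^ 4 = 1` and `b ^ 3 = 1`, `c` is an involution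
and `b ^ 2 * a ^ 3 * b ^ 2 = x⁻¹`, so `c * (b ^ 2 * a ^ 3 * b ^ 2) * c = (c * x * c)⁻¹`. Each relation
says that two elements commute, and both (i) and (ii) unfold to `x * c * x * c = c * x * c * x`;
(iii) and (iv) are (i) with one side of the commutation inverted. -/

theorem commute_mul_mul_iff_commute_mul_mul {S : Type*} [Semigroup S] (x c : S) :
    Commute x (c * x * c) ↔ Commute c (x * c * x) := by
  simp only [Commute, SemiconjBy, mul_assoc]
  exact eq_comm

theorem commute_mul_inv_mul_iff_of_inv_eq {G : Type*} [Group G] {c : G} (hc : c⁻¹ = c) (x : G) :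
    Commute x (c * x⁻¹ * c) ↔ Commute x (c * x * c) := by
  have h : c * x⁻¹ * c = (c * x * c)⁻¹ := by simp only [mul_inv_rev, hc, mul_assoc]
  rw [h, Commute.inv_right_iff]

theorem inv_eq_pow_of_pow_succ_eq_one {G : Type*} [Group G] {g : G} {n : ℕ} (h : g ^ (n + 1) = 1) :
    g⁻¹ = g ^ n :=
  inv_eq_of_mul_eq_one_left (by rwa [← pow_succ])

theorem pow_two_mul_pow_three_mul_pow_two_eq_inv {G : Type*} [Group G] {a b : G}
    (ha : a ^ 4 = 1) (hb : b ^ 3 = 1) : b ^ 2 * a ^ 3 * b ^ 2 = (b * a * b)⁻¹ := by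
  rw [← inv_eq_pow_of_pow_succ_eq_one ha, ← inv_eq_pow_of_pow_succ_eq_one hb]
  group

/-- The equivalent forms of the First Commutator relation of PPSL(2,ℤ):
for a group `G` with `a^4 = 1` and `b^3 = 1`, the four commutator relations
are equivalent. -/
theorem first_commutator_equivalent_forms {G : Type*} [Group G] (a b : G)
    (ha : a ^ 4 = 1) (hb : b ^ 3 = 1) :
    List.TFAE
      [⁅b * a * b, a ^ 2 * (b * a * b) * a ^ 2⁆ = 1,
       ⁅a ^ 2, (b * a * b) * a ^ 2 * (b * a * b)⁆ = 1,
       ⁅b * a * b, a ^ 2 * (b ^ 2 * a ^ 3 * b ^ 2) * a ^ 2⁆ = 1,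
       ⁅b ^ 2 * a ^ 3 * b ^ 2, a ^ 2 * (b * a * b) * a ^ 2⁆ = 1] := by
  have hc : (a ^ 2)⁻¹ = a ^ 2 := inv_eq_of_mul_eq_one_left (by rwa [← pow_add])
  simp only [commutatorElement_eq_one_iff_commute, pow_two_mul_pow_three_mul_pow_two_eq_inv ha hb]
  tfae_have 1 ↔ 2 := commute_mul_mul_iff_commute_mul_mul _ _
  tfae_have 1 ↔ 3 := (commute_mul_inv_mul_iff_of_inv_eq hc _).symm
  tfae_have 1 ↔ 4 := Commute.inv_left_iff.symm
  tfae_finish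
end

section
/- Let G be a group and let a, b ∈ G satisfy a^4 = 1 and b^3 = 1, and set v = a^2*b*a*b*a^2. Then ⁅b*a*b, a^2*b^2*a^2*(b*a*b)*a^2*b*a^2⁆ = 1 holds if and only if ⁅v, b*v*b^2⁆ = 1 holds. -/
open scoped commutatorElement

/-
Put `x = b*a*b`, `s = a^2` and `c = s*b⁻¹*s`. Since `s` is an involution and `b^2 = b⁻¹`, the
Second Commutator relation reads `[x, c*x*c⁻¹] = 1`, while (†) is the conjugate by `s` of
`[x, c⁻¹*x*c] = 1`. Conjugating by `c⁻¹` turns the first relation into the second.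
-/

theorem commute_conj_iff_commute_conj_inv {G : Type*} [Group G] (x c : G) :
    Commute x (c * x * c⁻¹) ↔ Commute x (c⁻¹ * x * c) := by
  rw [← Commute.conj_iff c⁻¹, Commute.symm_iff]
  simp only [inv_inv, mul_assoc, inv_mul_cancel_left, inv_mul_cancel, mul_one]

/-- The Second Commutator relation of PPSL(2,ℤ) is equivalent to the relation (†):
`⁅v, b*v*b^2⁆ = 1` where `v = a^2*b*a*b*a^2`. -/
theorem second_commutator_iff_dagger {G : Type*} [Group G] (a b : G)
    (ha : a ^ 4 = 1) (hb : b ^ 3 = 1) :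
    (⁅b * a * b, a ^ 2 * b ^ 2 * a ^ 2 * (b * a * b) * a ^ 2 * b * a ^ 2⁆ = 1)
      ↔ (⁅a ^ 2 * b * a * b * a ^ 2,
            b * (a ^ 2 * b * a * b * a ^ 2) * b ^ 2⁆ = 1) := by
  have hb2 : b ^ 2 = b⁻¹ := eq_inv_of_mul_eq_one_left (by rw [← pow_succ, hb])
  set s := a ^ 2
  have hss : s * s = 1 := by rw [← pow_two, ← pow_mul, ha]
  have hss' (y : G) : s * (s * y) = y := by rw [← mul_assoc, hss, one_mul]
  have hs : s⁻¹ = s := inv_eq_of_mul_eq_one_right hss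
  set x := b * a * b
  set c := s * b⁻¹ * s
  have hL : s * b ^ 2 * s * x * s * b * s = c * x * c⁻¹ := by
    simp only [c, hb2, mul_inv_rev, inv_inv, hs, mul_assoc]
  have hv : s * b * a * b * s = s * x * s⁻¹ := by
    simp only [x, hs, mul_assoc]
  have hw : b * (s * x * s⁻¹) * b ^ 2 = s * (c⁻¹ * x * c) * s⁻¹ := by
    simp only [c, hb2, mul_inv_rev, inv_inv, hs, mul_assoc, hss, hss', mul_one]
  rw [commutatorElement_eq_one_iff_commute, commutatorElement_eq_one_iff_commute, hL, hv, hw,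
    Commute.conj_iff, commute_conj_iff_commute_conj_inv]
end

section
/- Let G be a group, let b, v ∈ G with b^3 = 1, and suppose ⁅v, b*v*b^2⁆ = 1. Then for all ε, δ ∈ {1, 2} and all σ, τ ∈ {1, -1}, we have ⁅b^ε * v^σ * b^(2ε), b^δ * v^τ * b^(2δ)⁆ = 1. -/
/-!
Write `vₖ = bᵏ v b⁻ᵏ`. Since `b³ = 1`, the element `b^(2ε)` is `b^(-ε)`, so
`b^ε v^σ b^(2ε) = v_ε^σ`, and it suffices that all the conjugates `vₖ` commute pairwise.
Conjugating by `bⁱ` reduces `[vᵢ, vⱼ] = 1` to `[v, v_{j-i}] = 1`, and `j - i` only matters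
mod 3: the residue `1` is `(†)`, and the residue `2` is `(†)` conjugated by `b⁻¹`.
-/

open scoped commutatorElement

section

variable {G : Type*} [Group G] {b v : G}

lemma pow_two_mul_eq_inv_pow_of_pow_three_eq_one (hb : b ^ 3 = 1) (k : ℕ) :
    b ^ (2 * k) = (b ^ k)⁻¹ :=
  eq_inv_of_mul_eq_one_left <| by
    rw [← pow_add, show 2 * k + k = 3 * k by ring, pow_mul, hb, one_pow]

lemma pow_mul_zpow_mul_pow_two_mul_eq_conj_zpow (hb : b ^ 3 = 1) (k : ℕ) (σ : ℤ) :
    b ^ k * v ^ σ * b ^ (2 * k) = MulAut.conj (b ^ k) v ^ σ := by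
  rw [pow_two_mul_eq_inv_pow_of_pow_three_eq_one hb, MulAut.conj_apply, conj_zpow]

lemma commute_conj_zpow_of_pow_three_eq_one (hb : b ^ 3 = 1)
    (h : Commute v (MulAut.conj b v)) (k : ℤ) : Commute v (MulAut.conj (b ^ k) v) := by
  rw [zpow_eq_zpow_emod' k hb]
  obtain hk | hk | hk : k % (3 : ℕ) = 0 ∨ k % (3 : ℕ) = 1 ∨ k % (3 : ℕ) = 2 := by omega
  · rw [hk, zpow_zero, map_one]
    exact Commute.refl v
  · rwa [hk, zpow_one]
  · have hb2 : b ^ (2 : ℤ) = b⁻¹ := by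
      simpa using pow_two_mul_eq_inv_pow_of_pow_three_eq_one hb 1
    have h' := (h.map (MulAut.conj b⁻¹)).symm
    rw [← MulAut.mul_apply, ← map_mul, inv_mul_cancel, map_one, MulAut.one_apply] at h'
    rwa [hk, hb2]

lemma commute_conj_zpow_conj_zpow_of_pow_three_eq_one (hb : b ^ 3 = 1)
    (h : Commute v (MulAut.conj b v)) (i j : ℤ) :
    Commute (MulAut.conj (b ^ i) v) (MulAut.conj (b ^ j) v) := by
  have hj : MulAut.conj (b ^ j) v = MulAut.conj (b ^ i) (MulAut.conj (b ^ (j - i)) v) := by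
    rw [← MulAut.mul_apply, ← map_mul, ← zpow_add, add_sub_cancel]
  rw [hj]
  exact (commute_conj_zpow_of_pow_three_eq_one hb h (j - i)).map (MulAut.conj (b ^ i))

end

/-- If `b^3 = 1` and `⁅v, b*v*b^2⁆ = 1`, then all the relations
`⁅b^ε v^{±1} b^{2ε}, b^δ v^{±1} b^{2δ}⁆ = 1` hold for `ε, δ ∈ {1,2}`. -/
theorem dagger_implies_all_conjugate_commutators {G : Type*} [Group G] (b v : G)
    (hb : b ^ 3 = 1) (hdag : ⁅v, b * v * b ^ 2⁆ = 1) :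
    ∀ ε ∈ ({1, 2} : Set ℕ), ∀ δ ∈ ({1, 2} : Set ℕ),
      ∀ σ ∈ ({1, -1} : Set ℤ), ∀ τ ∈ ({1, -1} : Set ℤ),
        ⁅b ^ ε * v ^ σ * b ^ (2 * ε), b ^ δ * v ^ τ * b ^ (2 * δ)⁆ = 1 := by
  have hcomm : Commute v (MulAut.conj b v) := by
    rw [MulAut.conj_apply, ← pow_one b, ← pow_two_mul_eq_inv_pow_of_pow_three_eq_one hb, pow_one]
    exact commutatorElement_eq_one_iff_commute.mp hdag
  intro ε _ δ _ σ _ τ _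
  rw [pow_mul_zpow_mul_pow_two_mul_eq_conj_zpow hb, pow_mul_zpow_mul_pow_two_mul_eq_conj_zpow hb,
    commutatorElement_eq_one_iff_commute, ← zpow_natCast b ε, ← zpow_natCast b δ]
  exact (commute_conj_zpow_conj_zpow_of_pow_three_eq_one hb hcomm ε δ).zpow_zpow σ τ
end

section
/- Let G be a group and let a, b, t ∈ G satisfy the Power Law relations t^2 = 1, b^3 = 1, a^4 = 1, (t*b)^3 = 1, (t*a)^4 = 1, ⁅t, a^2⁆ = 1, ⁅t, a*t*a⁆ = 1, the Insertion relations ⁅t, b*t^ε*a*t^δ*b⁆ = 1 for all ε, δ ∈ {0,1}, and the Degeneracy relations t = ⁅a, b*t*b^2⁆ = ⁅a*t, b*t*b^2⁆ = ⁅a, t*b^2*t*b⁆ = ⁅a*t, t*b^2*t*b⁆. Then for every tuple (s₁, s₂, s₃, s₄, s₅, t₁, t₂, t₃, t₄, t₅) ∈ {0,1}^10 satisfying t₁ + t₂ ≡ s₁ + s₅, t₃ + t₄ ≡ s₂ + s₃, and t₃ + t₅ ≡ s₁ + s₄ (mod 2), the element t^{t₅} * b * t^{s₅} * a * t^{t₄}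 * b * t^{s₄} * b * t^{t₃} * b * t^{s₃} * a * t^{t₂} * a * t^{s₂} * a * t^{t₁} * b * t^{s₁} * b equals 1. -/
/-!
Moving each inserted `t ^ e` to the front of the word turns it into `(p * t * p⁻¹) ^ e`, where
`p` is the prefix of letters `a`, `b` preceding it, and leaves behind the uninserted word
`b a b b b a a a b b`, which is `1`. Reducing the prefixes modulo `b ^ 3 = a ^ 4 = 1`, the
relations identify every such conjugate with one of `t`, `u = b t b⁻¹`, `v = (b a) t (b a)⁻¹`,
`v t`, `t u`. These are pairwise commuting involutions (the degeneracy relations give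
`[t, u] = 1`, the insertion relations `[t, v] = 1`), and the three parity conditions say exactly
that each of `t`, `u`, `v` occurs an even number of times.
-/

open scoped commutatorElement

section
variable {G : Type*} [Group G]

theorem commute_of_commutatorElement_eq_commutatorElement_mul {a c t : G}
    (h : ⁅a, c⁆ = ⁅a * t, c⁆) : Commute t c := by
  have h' : t * c * t⁻¹ = c :=
    calc t * c * t⁻¹ = a⁻¹ * ⁅a * t, c⁆ * c * a := by rw [commutatorElement_def]; group
      _ = c := by rw [← h, commutatorElement_def]; group
  exact mul_inv_eq_iff_eq_mul.mp h'

theorem conj_eq_mul_of_eq_commutatorElement {a c t : G} (h : t = ⁅a, c⁆) :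
    MulAut.conj a c = t * c := by
  rw [h, commutatorElement_def, MulAut.conj_apply]
  group

theorem conj_mul_self_eq_of_mul_pow_three_eq_one {b t : G} (ht : t ^ 2 = 1) (hb : b ^ 3 = 1)
    (htb : (t * b) ^ 3 = 1) : MulAut.conj (b * b) t = t * MulAut.conj b t := by
  have hsq : (t * b) * (t * b) = (t * b)⁻¹ :=
    eq_inv_of_mul_eq_one_left (by rw [← pow_two, ← pow_succ, htb])
  have hbb : b * b = b⁻¹ := eq_inv_of_mul_eq_one_left (by rw [← pow_two, ← pow_succ, hb])
  have htt : t⁻¹ = t := inv_eq_of_mul_eq_one_left (by rw [← pow_two, ht])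
  simp only [MulAut.conj_apply, mul_inv_eq_iff_eq_mul]
  calc b * b * t = (t * b)⁻¹ := by rw [hbb, mul_inv_rev, htt]
    _ = _ := by rw [← hsq]; group

theorem commute_conj_of_commute_mul_mul {a t : G} (hata : Commute t (a * t * a))
    (ha2 : Commute t (a ^ 2)) : Commute t (MulAut.conj a t) := by
  have : MulAut.conj a t = a * t * a * (a ^ 2)⁻¹ := by rw [MulAut.conj_apply]; group
  rw [this]
  exact hata.mul_right ha2.inv_right

theorem commute_conj_mul_of_commute {a b t : G} (hbab : Commute t (b * a * b))
    (hbatb : Commute t (b * a * t * b)) : Commute t (MulAut.conj (b * a) t) := by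
  have : MulAut.conj (b * a) t = b * a * t * b * (b * a * b)⁻¹ := by
    rw [MulAut.conj_apply]; group
  rw [this]
  exact hbatb.mul_right hbab.inv_right

theorem insertion_word_eq_prod_conj_pow (a b t : G) (s₁ s₂ s₃ s₄ s₅ t₁ t₂ t₃ t₄ t₅ : ℕ) :
    t ^ t₅ * b * t ^ s₅ * a * t ^ t₄ * b * t ^ s₄ * b * t ^ t₃ * b *
      t ^ s₃ * a * t ^ t₂ * a * t ^ s₂ * a * t ^ t₁ * b * t ^ s₁ * b =
    t ^ t₅ * MulAut.conj b t ^ s₅ * MulAut.conj (b * a) t ^ t₄ *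
      MulAut.conj (b * a * b) t ^ s₄ * MulAut.conj (b * a * b * b) t ^ t₃ *
      MulAut.conj (b * a * b * b * b) t ^ s₃ * MulAut.conj (b * a * b * b * b * a) t ^ t₂ *
      MulAut.conj (b * a * b * b * b * a * a) t ^ s₂ *
      MulAut.conj (b * a * b * b * b * a * a * a) t ^ t₁ *
      MulAut.conj (b * a * b * b * b * a * a * a * b) t ^ s₁ *
      (b * a * b * b * b * a * a * a * b * b) := by
  simp only [MulAut.conj_apply, conj_pow]
  group

theorem insertion_word_eq_prod_pow {a b t u v : G} (hu : MulAut.conj b t = u)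
    (hv : MulAut.conj (b * a) t = v) (hb : b ^ 3 = 1) (ha : a ^ 4 = 1)
    (hbab : Commute t (b * a * b)) (ha2 : Commute t (a ^ 2))
    (hbb : MulAut.conj (b * b) t = t * u) (hau : MulAut.conj a u = t * u)
    (htu : Commute t u) (hu2 : u ^ 2 = 1) (s₁ s₂ s₃ s₄ s₅ t₁ t₂ t₃ t₄ t₅ : ℕ) :
    t ^ t₅ * b * t ^ s₅ * a * t ^ t₄ * b * t ^ s₄ * b * t ^ t₃ * b *
      t ^ s₃ * a * t ^ t₂ * a * t ^ s₂ * a * t ^ t₁ * b * t ^ s₁ * b =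
    t ^ t₅ * u ^ s₅ * v ^ t₄ * t ^ s₄ * (v * t) ^ t₃ * v ^ s₃ * u ^ t₂ * v ^ s₂ * u ^ t₁ *
      (t * u) ^ s₁ := by
  have hb3 : b * b * b = 1 := by rw [← pow_three', hb]
  have ha4 : a * a * a * a = 1 := by rw [← ha, pow_succ, pow_three']
  have hb3' (x : G) : x * b * b * b = x := by rw [mul_assoc x, mul_assoc x, hb3, mul_one]
  have ha4' (x : G) : x * a * a * a * a = x := by
    rw [mul_assoc x, mul_assoc x, mul_assoc x, ha4, mul_one]
  have hconj (x y z : G) : MulAut.conj (x * y) z = MulAut.conj x (MulAut.conj y z) := by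
    rw [map_mul, MulAut.mul_apply]
  have haa : MulAut.conj (a * a) t = t := by
    rw [MulAut.conj_apply, ← pow_two, ← ha2.eq, mul_inv_cancel_right]
  have hbab' : MulAut.conj (b * a * b) t = t := by
    rw [MulAut.conj_apply, ← hbab.eq, mul_inv_cancel_right]
  have hbabb : MulAut.conj (b * a * b * b) t = v * t := by
    calc MulAut.conj (b * a * b * b) t = MulAut.conj (b * a) (t * u) := by
          rw [mul_assoc (b * a), hconj, hbb]
      _ = v * MulAut.conj b (t * u) := by rw [map_mul, hv, hconj, ← hau]
      _ = v * (u * (t * u)) := by rw [map_mul, hu, ← hbb, hconj, hu]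
      _ = v * t := by rw [← mul_assoc u, ← htu.eq, mul_assoc t, ← pow_two, hu2, mul_one]
  have hbaa : MulAut.conj (b * a * a) t = u := by rw [mul_assoc, hconj, haa, hu]
  have hbaaa : MulAut.conj (b * a * a * a) t = v := by
    rw [mul_assoc (b * a), hconj (b * a), haa, hv]
  rw [insertion_word_eq_prod_conj_pow]
  -- modulo `b ^ 3 = a ^ 4 = 1` the prefixes become `b, ba, bab, babb, ba, baa, baaa, b, bb`
  simp only [hb3', ha4', hb3, hu, hv, hbab', hbabb, hbaa, hbaaa, hbb, mul_one]

theorem pow_eq_one_of_sq_eq_one {x : G} (hx : x ^ 2 = 1) {n : ℕ} (hn : (n : ZMod 2) = 0) :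
    x ^ n = 1 := by
  obtain ⟨k, rfl⟩ := (ZMod.natCast_eq_zero_iff_even).mp hn
  rw [← two_mul, pow_mul, hx, one_pow]

theorem insertion_prod_pow_eq_one {x y z : G}
    (hxy : Commute x y) (hxz : Commute x z) (hyz : Commute y z)
    (hx : x ^ 2 = 1) (hy : y ^ 2 = 1) (hz : z ^ 2 = 1) {s₁ s₂ s₃ s₄ s₅ t₁ t₂ t₃ t₄ t₅ : ℕ}
    (h₁ : (t₁ : ZMod 2) + t₂ = s₁ + s₅) (h₂ : (t₃ : ZMod 2) + t₄ = s₂ + s₃)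
    (h₃ : (t₃ : ZMod 2) + t₅ = s₁ + s₄) :
    x ^ t₅ * y ^ s₅ * z ^ t₄ * x ^ s₄ * (z * x) ^ t₃ * z ^ s₃ * y ^ t₂ * z ^ s₂ * y ^ t₁ *
      (x * y) ^ s₁ = 1 := by
  have hcollect : x ^ t₅ * y ^ s₅ * z ^ t₄ * x ^ s₄ * (z * x) ^ t₃ * z ^ s₃ * y ^ t₂ * z ^ s₂ *
      y ^ t₁ * (x * y) ^ s₁ =
      x ^ (t₅ + s₄ + t₃ + s₁) * y ^ (s₅ + t₂ + t₁ + s₁) * z ^ (t₄ + t₃ + s₃ + s₂) := by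
    have hmerge (w : G) (m n : ℕ) (c : G) : w ^ m * (w ^ n * c) = w ^ (m + n) * c := by
      rw [← mul_assoc, ← pow_add]
    simp only [hxz.symm.mul_pow, hxy.mul_pow, mul_assoc, hmerge, ← pow_add,
      fun m n c => (hxy.pow_pow n m).symm.left_comm c,
      fun m n c => (hxz.pow_pow n m).symm.left_comm c, fun m n => (hxz.pow_pow n m).symm.eq,
      fun m n => (hyz.pow_pow n m).symm.eq]
  rw [hcollect, pow_eq_one_of_sq_eq_one hx, pow_eq_one_of_sq_eq_one hy,
    pow_eq_one_of_sq_eq_one hz, one_mul, one_mul] <;> push_cast <;> grind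

end

theorem degeneracy_t_insertions_general {G : Type*} [Group G] (a b t : G)
    (ht : t ^ 2 = 1) (hb : b ^ 3 = 1) (ha : a ^ 4 = 1)
    (htb : (t * b) ^ 3 = 1)
    (hta2 : ⁅t, a ^ 2⁆ = 1) (htata : ⁅t, a * t * a⁆ = 1)
    (hins : ∀ ε ∈ ({0, 1} : Set ℕ), ∀ δ ∈ ({0, 1} : Set ℕ),
      ⁅t, b * t ^ ε * a * t ^ δ * b⁆ = 1)
    (hdeg1 : t = ⁅a, b * t * b ^ 2⁆)
    (hdeg2 : t = ⁅a * t, b * t * b ^ 2⁆) :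
    ∀ s₁ ∈ ({0, 1} : Set ℕ), ∀ s₂ ∈ ({0, 1} : Set ℕ), ∀ s₃ ∈ ({0, 1} : Set ℕ),
      ∀ s₄ ∈ ({0, 1} : Set ℕ), ∀ s₅ ∈ ({0, 1} : Set ℕ),
        ∀ t₁ ∈ ({0, 1} : Set ℕ), ∀ t₂ ∈ ({0, 1} : Set ℕ), ∀ t₃ ∈ ({0, 1} : Set ℕ),
          ∀ t₄ ∈ ({0, 1} : Set ℕ), ∀ t₅ ∈ ({0, 1} : Set ℕ),
            ((t₁ : ZMod 2) + (t₂ : ZMod 2) = (s₁ : ZMod 2) + (s₅ : ZMod 2)) →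
            ((t₃ : ZMod 2) + (t₄ : ZMod 2) = (s₂ : ZMod 2) + (s₃ : ZMod 2)) →
            ((t₃ : ZMod 2) + (t₅ : ZMod 2) = (s₁ : ZMod 2) + (s₄ : ZMod 2)) →
              t ^ t₅ * b * t ^ s₅ * a * t ^ t₄ * b * t ^ s₄ * b * t ^ t₃ * b *
                t ^ s₃ * a * t ^ t₂ * a * t ^ s₂ * a * t ^ t₁ * b * t ^ s₁ * b
                = 1 := by
  intro s₁ _ s₂ _ s₃ _ s₄ _ s₅ _ t₁ _ t₂ _ t₃ _ t₄ _ t₅ _ h₁ h₂ h₃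
  rw [commutatorElement_eq_one_iff_commute] at hta2 htata
  have hbab : Commute t (b * a * b) :=
    commutatorElement_eq_one_iff_commute.mp (by simpa using hins 0 (by simp) 0 (by simp))
  have hbatb : Commute t (b * a * t * b) :=
    commutatorElement_eq_one_iff_commute.mp (by simpa using hins 0 (by simp) 1 (by simp))
  have hconj_b : b * t * b ^ 2 = MulAut.conj b t := by
    rw [MulAut.conj_apply, eq_inv_of_mul_eq_one_left (by rw [← pow_succ, hb] : b ^ 2 * b = 1)]
  rw [hconj_b] at hdeg1 hdeg2
  have htu := commute_of_commutatorElement_eq_commutatorElement_mul (hdeg1.symm.trans hdeg2)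
  have hu2 : MulAut.conj b t ^ 2 = 1 := by rw [← map_pow, ht, map_one]
  have hv2 : MulAut.conj (b * a) t ^ 2 = 1 := by rw [← map_pow, ht, map_one]
  have huv : Commute (MulAut.conj b t) (MulAut.conj (b * a) t) := by
    rw [map_mul, MulAut.mul_apply]
    exact (commute_conj_of_commute_mul_mul htata hta2).map (MulAut.conj b)
  rw [insertion_word_eq_prod_pow rfl rfl hb ha hbab hta2
    (conj_mul_self_eq_of_mul_pow_three_eq_one ht hb htb)
    (conj_eq_mul_of_eq_commutatorElement hdeg1) htu hu2]
  exact insertion_prod_pow_eq_one htu (commute_conj_mul_of_commute hbab hbatb) huv ht hu2 hv2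
    h₁ h₂ h₃

/-- Under the Power Law, Insertion and Degeneracy relations, every t-insertion
in the degeneracy word `(b*a*b)*(b^2*a^3*b^2)` whose exponents satisfy the
Degeneracy linear system mod 2 equals the identity. -/
theorem degeneracy_t_insertions {G : Type*} [Group G] (a b t : G)
    (ht : t ^ 2 = 1) (hb : b ^ 3 = 1) (ha : a ^ 4 = 1)
    (htb : (t * b) ^ 3 = 1) (hta : (t * a) ^ 4 = 1)
    (hta2 : ⁅t, a ^ 2⁆ = 1) (htata : ⁅t, a * t * a⁆ = 1)
    (hins : ∀ ε ∈ ({0, 1} : Set ℕ), ∀ δ ∈ ({0, 1} : Set ℕ),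
      ⁅t, b * t ^ ε * a * t ^ δ * b⁆ = 1)
    (hdeg1 : t = ⁅a, b * t * b ^ 2⁆)
    (hdeg2 : t = ⁅a * t, b * t * b ^ 2⁆)
    (hdeg3 : t = ⁅a, t * b ^ 2 * t * b⁆)
    (hdeg4 : t = ⁅a * t, t * b ^ 2 * t * b⁆) :
    ∀ s₁ ∈ ({0, 1} : Set ℕ), ∀ s₂ ∈ ({0, 1} : Set ℕ), ∀ s₃ ∈ ({0, 1} : Set ℕ),
      ∀ s₄ ∈ ({0, 1} : Set ℕ), ∀ s₅ ∈ ({0, 1} : Set ℕ),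
        ∀ t₁ ∈ ({0, 1} : Set ℕ), ∀ t₂ ∈ ({0, 1} : Set ℕ), ∀ t₃ ∈ ({0, 1} : Set ℕ),
          ∀ t₄ ∈ ({0, 1} : Set ℕ), ∀ t₅ ∈ ({0, 1} : Set ℕ),
            ((t₁ : ZMod 2) + (t₂ : ZMod 2) = (s₁ : ZMod 2) + (s₅ : ZMod 2)) →
            ((t₃ : ZMod 2) + (t₄ : ZMod 2) = (s₂ : ZMod 2) + (s₃ : ZMod 2)) →
            ((t₃ : ZMod 2) + (t₅ : ZMod 2) = (s₁ : ZMod 2) + (s₄ : ZMod 2)) →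
              t ^ t₅ * b * t ^ s₅ * a * t ^ t₄ * b * t ^ s₄ * b * t ^ t₃ * b *
                t ^ s₃ * a * t ^ t₂ * a * t ^ s₂ * a * t ^ t₁ * b * t ^ s₁ * b
                = 1 :=
  degeneracy_t_insertions_general a b t ht hb ha htb hta2 htata hins hdeg1 hdeg2
end

section
/- Let G be a group generated by three elements a, b, t satisfying t^2 = 1, b^3 = 1, a^4 = 1, (t*b)^3 = 1, (a*b)^5 = 1, and t = ⁅a, b*t*b^2⁆. Then G is perfect, i.e., the commutator subgroup of G is all of G. -/
open scoped commutatorElement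

/-! `t` is a commutator by the degeneracy relation. In the abelianization, `(ab)^5 = 1` becomes
`a b^2 = 1`, so `a = b`; then the image of `a` has order dividing `gcd(3, 4) = 1`. Hence all three
generators lie in the commutator subgroup. -/

theorem eq_one_of_pow_four_of_pow_three_of_mul_pow_five {M : Type*} [CommMonoid M] {a b : M}
    (ha : a ^ 4 = 1) (hb : b ^ 3 = 1) (hab : (a * b) ^ 5 = 1) : a = 1 ∧ b = 1 := by
  have hab2 : a * b ^ 2 = 1 := by
    rwa [mul_pow, pow_succ a 4, show 5 = 3 + 2 from rfl, pow_add b, ha, hb, one_mul,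
      one_mul] at hab
  have ha_eq_b : a = b := calc
    a = a * b ^ 2 * b := by rw [mul_assoc, ← pow_succ, hb, mul_one]
    _ = b := by rw [hab2, one_mul]
  subst ha_eq_b
  have ha1 : a ^ Nat.gcd 3 4 = 1 := pow_gcd_eq_one.mpr ⟨hb, ha⟩
  rw [show Nat.gcd 3 4 = 1 by norm_num, pow_one] at ha1
  exact ⟨ha1, ha1⟩

theorem Abelianization.of_eq_one_iff {G : Type*} [Group G] {x : G} :
    Abelianization.of x = 1 ↔ x ∈ commutator G := by
  rw [← MonoidHom.mem_ker, Abelianization.ker_of]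

theorem generated_group_is_perfect_general {G : Type*} [Group G] (a b t : G)
    (hgen : Subgroup.closure ({a, b, t} : Set G) = ⊤)
    (hb : b ^ 3 = 1) (ha : a ^ 4 = 1)
    (hab : (a * b) ^ 5 = 1)
    (hdeg : t = ⁅a, b * t * b ^ 2⁆) :
    commutator G = ⊤ := by
  have hab_abel : Abelianization.of a = 1 ∧ Abelianization.of b = 1 :=
    eq_one_of_pow_four_of_pow_three_of_mul_pow_five (by rw [← map_pow, ha, map_one])
      (by rw [← map_pow, hb, map_one]) (by rw [← map_mul, ← map_pow, hab, map_one])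
  have ht_mem : t ∈ commutator G := by
    rw [hdeg, commutator_def]
    exact Subgroup.commutator_mem_commutator (Subgroup.mem_top _) (Subgroup.mem_top _)
  rw [eq_top_iff, ← hgen, Subgroup.closure_le]
  rintro x (rfl | rfl | rfl)
  · exact Abelianization.of_eq_one_iff.mp hab_abel.1
  · exact Abelianization.of_eq_one_iff.mp hab_abel.2
  · exact ht_mem

/-- A group generated by `a`, `b`, `t` satisfying `t^2 = b^3 = a^4 = (t*b)^3
= (a*b)^5 = 1` and `t = ⁅a, b*t*b^2⁆` is perfect. -/
theorem generated_group_is_perfect {G : Type*} [Group G] (a b t : G)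
    (hgen : Subgroup.closure ({a, b, t} : Set G) = ⊤)
    (ht : t ^ 2 = 1) (hb : b ^ 3 = 1) (ha : a ^ 4 = 1)
    (htb : (t * b) ^ 3 = 1) (hab : (a * b) ^ 5 = 1)
    (hdeg : t = ⁅a, b * t * b ^ 2⁆) :
    commutator G = ⊤ :=
  generated_group_is_perfect_general a b t hgen hb ha hab hdeg
end

section
/- Let G be a group and let a, b ∈ G satisfy a^4 = 1 and b^3 = 1. Then ⁅b*a*b, a^2*(b*a*b)*a^2⁆ = 1 holds if and only if for all ε₁, ε₂ ∈ {1, 2}, setting g = b^{ε₂} * a^2 * b^{ε₁} and c = g⁻¹ * b^{2ε₂} * a^{2ε₂ − 1} * g, one has a^{2ε₁ + 1} * c * a^{2ε₁ − 1} = b^{2ε₁} * c * b^{ε₁}. -/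
/-!
Write `x = b a b` and `y = a² x a²`. The flip `c` of `g = b^{ε₂} a² b^{ε₁}` is the conjugate by
`a² b^{ε₁}` of `b^{ε₂} a^{2ε₂-1} b^{ε₂}`, which is `x^{±1}` since `a⁴ = b³ = 1`. The same torsion turns
`FE(g)` into the statement that `c` commutes with `a^{2ε₁-1} b^{-ε₁}`, whose conjugate back by
`a² b^{ε₁}` is `y^{±1}`. So each of the four functional equations says exactly that `x` and `y`
commute, which is the First Commutator relation.
-/

open scoped commutatorElement

section Group

variable {G : Type*} [Group G]

theorem commute_mul_inv_iff_inv_mul_mul_eq {c p q : G} :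
    Commute c (p * q⁻¹) ↔ p⁻¹ * c * p = q⁻¹ * c * q := by
  constructor
  · intro h
    calc p⁻¹ * c * p = p⁻¹ * (c * (p * q⁻¹)) * q := by group
      _ = p⁻¹ * (p * q⁻¹ * c) * q := by rw [h.eq]
      _ = q⁻¹ * c * q := by group
  · intro h
    calc c * (p * q⁻¹) = p * (p⁻¹ * c * p) * q⁻¹ := by group
      _ = p * (q⁻¹ * c * q) * q⁻¹ := by rw [h]
      _ = p * q⁻¹ * c := by group

theorem commute_inv_mul_mul_iff {h w t : G} :
    Commute (h⁻¹ * w * h) t ↔ Commute w (h * t * h⁻¹) := by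
  rw [← Commute.conj_iff h]
  simp only [mul_assoc, mul_inv_cancel_left, mul_inv_cancel, mul_one]

theorem inv_mul_pow_two_mul_mul_mul_eq_conj (b x y : G) (m n : ℕ) :
    (b ^ m * x * b ^ n)⁻¹ * b ^ (2 * m) * y * (b ^ m * x * b ^ n)
      = (x * b ^ n)⁻¹ * (b ^ m * y * b ^ m) * (x * b ^ n) := by
  rw [two_mul, pow_add]
  group

end Group

section Torsion

variable {G : Type*} [Group G] {a b : G}

theorem pow_mul_mul_pow_eq_iff_commute (ha : a ^ 4 = 1) (hb : b ^ 3 = 1) {e : ℕ} (he : 1 ≤ e)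
    (c : G) :
    a ^ (2 * e + 1) * c * a ^ (2 * e - 1) = b ^ (2 * e) * c * b ^ e ↔
      Commute c (a ^ (2 * e - 1) * (b ^ e)⁻¹) := by
  have hae : a ^ (2 * e + 1) = (a ^ (2 * e - 1))⁻¹ := by
    refine eq_inv_of_mul_eq_one_left ?_
    rw [← pow_add, show 2 * e + 1 + (2 * e - 1) = 4 * e by omega, pow_mul, ha, one_pow]
  have hbe : b ^ (2 * e) = (b ^ e)⁻¹ := by
    refine eq_inv_of_mul_eq_one_left ?_
    rw [← pow_add, show 2 * e + e = 3 * e by omega, pow_mul, hb, one_pow]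
  rw [hae, hbe, commute_mul_inv_iff_inv_mul_mul_eq]

theorem pow_two_mul_pow_three_mul_pow_two (ha : a ^ 4 = 1) (hb : b ^ 3 = 1) :
    b ^ 2 * a ^ 3 * b ^ 2 = (b * a * b)⁻¹ := by
  have ha3 : a ^ 3 = a⁻¹ := eq_inv_of_mul_eq_one_left (by rw [← pow_succ, ha])
  have hb2 : b ^ 2 = b⁻¹ := eq_inv_of_mul_eq_one_left (by rw [← pow_succ, hb])
  rw [ha3, hb2]
  group

theorem commute_pow_mul_pow_mul_pow_iff (ha : a ^ 4 = 1) (hb : b ^ 3 = 1) {e : ℕ}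
    (he : e ∈ ({1, 2} : Set ℕ)) {z : G} :
    Commute (b ^ e * a ^ (2 * e - 1) * b ^ e) z ↔ Commute (b * a * b) z := by
  rcases he with rfl | rfl
  · simp only [pow_one, Nat.reduceMul, Nat.reduceSub]
  · rw [show 2 * 2 - 1 = 3 from rfl, pow_two_mul_pow_three_mul_pow_two ha hb,
      Commute.inv_left_iff]

theorem commute_conj_pow_mul_inv_pow_iff (ha : a ^ 4 = 1) (hb : b ^ 3 = 1) {e : ℕ}
    (he : e ∈ ({1, 2} : Set ℕ)) {z : G} :
    Commute z ((a ^ 2 * b ^ e) * (a ^ (2 * e - 1) * (b ^ e)⁻¹) * (a ^ 2 * b ^ e)⁻¹) ↔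
      Commute z (a ^ 2 * (b * a * b) * a ^ 2) := by
  have ha2 : (a ^ 2)⁻¹ = a ^ 2 := inv_eq_of_mul_eq_one_left (by rw [← pow_add, ha])
  have hb2 : (b ^ 2)⁻¹ = b := inv_eq_of_mul_eq_one_right (by rw [← pow_succ, hb])
  rcases he with rfl | rfl
  · have hconj : (a ^ 2 * b) * (a * b⁻¹) * (a ^ 2 * b)⁻¹ = a ^ 2 * (b * a * b) * a ^ 2 :=
      calc (a ^ 2 * b) * (a * b⁻¹) * (a ^ 2 * b)⁻¹
          = a ^ 2 * (b * a * (b ^ 2)⁻¹) * (a ^ 2)⁻¹ := by group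
        _ = a ^ 2 * (b * a * b) * a ^ 2 := by rw [ha2, hb2]
    simp only [pow_one, Nat.reduceMul, Nat.reduceSub, hconj]
  · have hconj : (a ^ 2 * b ^ 2) * (a ^ (2 * 2 - 1) * (b ^ 2)⁻¹) * (a ^ 2 * b ^ 2)⁻¹
        = (a ^ 2 * (b * a * b) * a ^ 2)⁻¹ :=
      calc (a ^ 2 * b ^ 2) * (a ^ (2 * 2 - 1) * (b ^ 2)⁻¹) * (a ^ 2 * b ^ 2)⁻¹
          = a ^ 2 * (b ^ 2 * a ^ 3 * ((b ^ 2)⁻¹ * (b ^ 2)⁻¹)) * (a ^ 2)⁻¹ := by group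
        _ = (a ^ 2)⁻¹ * (b * a * b)⁻¹ * (a ^ 2)⁻¹ := by
            rw [hb2, ← sq, pow_two_mul_pow_three_mul_pow_two ha hb, ha2]
        _ = (a ^ 2 * (b * a * b) * a ^ 2)⁻¹ := by group
    rw [hconj, Commute.inv_right_iff]

theorem functional_equation_iff_commute (ha : a ^ 4 = 1) (hb : b ^ 3 = 1) {ε₁ ε₂ : ℕ}
    (hε₁ : ε₁ ∈ ({1, 2} : Set ℕ)) (hε₂ : ε₂ ∈ ({1, 2} : Set ℕ)) :
    a ^ (2 * ε₁ + 1) *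
        ((b ^ ε₂ * a ^ 2 * b ^ ε₁)⁻¹ * b ^ (2 * ε₂) * a ^ (2 * ε₂ - 1) * (b ^ ε₂ * a ^ 2 * b ^ ε₁)) *
        a ^ (2 * ε₁ - 1)
      = b ^ (2 * ε₁) *
        ((b ^ ε₂ * a ^ 2 * b ^ ε₁)⁻¹ * b ^ (2 * ε₂) * a ^ (2 * ε₂ - 1) * (b ^ ε₂ * a ^ 2 * b ^ ε₁)) *
        b ^ ε₁ ↔
      Commute (b * a * b) (a ^ 2 * (b * a * b) * a ^ 2) := by
  have hε₁_pos : 1 ≤ ε₁ := by rcases hε₁ with rfl | rfl <;> simp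
  rw [inv_mul_pow_two_mul_mul_mul_eq_conj, pow_mul_mul_pow_eq_iff_commute ha hb hε₁_pos,
    commute_inv_mul_mul_iff, commute_pow_mul_pow_mul_pow_iff ha hb hε₂,
    commute_conj_pow_mul_inv_pow_iff ha hb hε₁]

end Torsion

/-- The First Commutator relation is equivalent to the functional equation
FE(g) for all length-two normal-form words `g = b^{ε₂} a² b^{ε₁}` with
`ε₁, ε₂ ∈ {1,2}`. -/
theorem first_commutator_iff_FE_length_two {G : Type*} [Group G] (a b : G)
    (ha : a ^ 4 = 1) (hb : b ^ 3 = 1) :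
    (⁅b * a * b, a ^ 2 * (b * a * b) * a ^ 2⁆ = 1) ↔
      (∀ ε₁ ∈ ({1, 2} : Set ℕ), ∀ ε₂ ∈ ({1, 2} : Set ℕ),
        ∀ g c : G, g = b ^ ε₂ * a ^ 2 * b ^ ε₁ →
          c = g⁻¹ * b ^ (2 * ε₂) * a ^ (2 * ε₂ - 1) * g →
            a ^ (2 * ε₁ + 1) * c * a ^ (2 * ε₁ - 1)
              = b ^ (2 * ε₁) * c * b ^ ε₁) := by
  rw [commutatorElement_eq_one_iff_commute]
  constructor
  · rintro hxy ε₁ hε₁ ε₂ hε₂ g c rfl rfl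
    exact (functional_equation_iff_commute ha hb hε₁ hε₂).2 hxy
  · intro hFE
    have hone : 1 ∈ ({1, 2} : Set ℕ) := Set.mem_insert 1 {2}
    exact (functional_equation_iff_commute ha hb hone hone).1 (hFE 1 hone 1 hone _ _ rfl rfl)
end
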